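/- arXiv:1312.5668 — 2 statements merged into one kernel-verified Lean document; each statement's English description precedes it below -/
import Mathlib

section
/- Let ⋆ be an involution on the Heisenberg group Γ. Then there exists an automorphism φ of Γ such that the involution † on Γ defined by g† = φ((φ⁻¹(g))⋆) is of one of the following four types: (I) there exist integers m, n with x† = λ^m·x and y† = λ^n·y; (II) x† = x⁻¹ and y† = y⁻¹; (III) there exists an integer m with x† = x and y† = λ^m·y⁻¹; (IV) there exists an integer m with x† = λ^m·y and y† = λ^{−m}·x. -/
/-- The commutator `g⁻¹h⁻¹gh` used in the paper's convention. -/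
def commS {G : Type*} [Group G] (g h : G) : G := g⁻¹ * h⁻¹ * g * h

/-- Relations of the Heisenberg group: `[[x,y],x] = [[x,y],y] = 1`. -/
def heisRels : Set (FreeGroup (Fin 2)) :=
  { commS (commS (FreeGroup.of 0) (FreeGroup.of 1)) (FreeGroup.of 0),
    commS (commS (FreeGroup.of 0) (FreeGroup.of 1)) (FreeGroup.of 1) }

/-- The Heisenberg group, presented by `x, y` with `[[x,y],x] = [[x,y],y] = 1`. -/
abbrev Heisenberg : Type := PresentedGroup heisRels

/-- The generator `x` of the Heisenberg group. -/
def Hx : Heisenberg := PresentedGroup.of 0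

/-- The generator `y` of the Heisenberg group. -/
def Hy : Heisenberg := PresentedGroup.of 1

/-- The central element `λ = [x,y]`. -/
def Hlam : Heisenberg := commS Hx Hy

/-- A pair of elements of a group is free if the induced map from the free group
on two generators is injective. -/
def IsFreePair {G : Type*} [Group G] (u v : G) : Prop :=
  Function.Injective ⇑(FreeGroup.lift (fun b : Bool => if b then u else v) : FreeGroup Bool →* G)

/-!
The star `⋆` is `g ↦ σ(g)⁻¹` for the automorphism `σ g = (g⁻¹)⋆`, which satisfies `σ² = 1`, so it
suffices to classify involutive automorphisms up to conjugacy. Realize `Γ` as `ℤ³` with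
`⟨a, b, c⟩ = x ^ a * y ^ b * λ ^ c`. An automorphism acts on `Γ / ⟨λ⟩ = ℤ²` through a matrix in
`GL₂(ℤ)`, every matrix of determinant `±1` arises, and it determines the automorphism up to central
factors. The involutions of `GL₂(ℤ)` are `±1` and the conjugates of `diag(1, -1)` and of the swap
`[0 1; 1 0]` (reduce the off-diagonal entry as in the Euclidean algorithm), one for each of the
types (I)–(IV). Finally, `σ² = 1` forces the central factors into the stated shape.
-/

section Commutator

variable {G : Type*} [Group G]

theorem commS_eq_one_iff {g h : G} : commS g h = 1 ↔ Commute g h := by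
  rw [commS, show g⁻¹ * h⁻¹ * g * h = (h * g)⁻¹ * (g * h) by group, inv_mul_eq_one, eq_comm]
  rfl

theorem map_commS {H F : Type*} [Group H] [FunLike F G H] [MonoidHomClass F G H] (f : F)
    (g h : G) : f (commS g h) = commS (f g) (f h) := by
  simp only [commS, map_mul, map_inv]

theorem zpow_mul_zpow_of_commute_commS {x y : G} (hx : Commute (commS x y) x)
    (hy : Commute (commS x y) y) (a b : ℤ) :
    y ^ b * x ^ a = x ^ a * y ^ b * commS x y ^ (-(a * b)) := by
  set l := commS x y
  have hyx : SemiconjBy y x (x * l⁻¹) := by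
    change y * x = x * l⁻¹ * y
    rw [mul_assoc, hy.inv_left.eq, show l = x⁻¹ * y⁻¹ * x * y from rfl]
    group
  have hyxa : y * x ^ a = x ^ a * l ^ (-a) * y := by
    rw [(hyx.zpow_right a).eq, (hx.inv_left.symm).mul_zpow, inv_zpow', mul_assoc]
  have hxy : SemiconjBy (x ^ (-a)) y (l ^ (-a) * y) := by
    change x ^ (-a) * y = l ^ (-a) * y * x ^ (-a)
    calc x ^ (-a) * y = x ^ (-a) * (y * x ^ a) * x ^ (-a) := by group
      _ = l ^ (-a) * y * x ^ (-a) := by rw [hyxa]; group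
  calc y ^ b * x ^ a = x ^ a * (x ^ (-a) * y ^ b) * x ^ a := by group
    _ = x ^ a * y ^ b * l ^ (-(a * b)) := by
      rw [(hxy.zpow_right b).eq, (hy.zpow_left (-a)).mul_zpow, ← zpow_mul,
        ((hy.zpow_left _).zpow_right b).eq]
      group

end Commutator

section AntiInvolution

variable {G : Type*} [Group G]

theorem map_inv_of_map_mul_rev {S : G → G} (hmul : ∀ g h, S (g * h) = S h * S g) (g : G) :
    S g⁻¹ = (S g)⁻¹ :=
  congrArg MulOpposite.unop
    (map_inv (MonoidHom.mk' (fun g => MulOpposite.op (S g)) fun g h => by simp [hmul]) g)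

def mulAutOfAntiInvolution (S : G → G) (hmul : ∀ g h, S (g * h) = S h * S g)
    (hinv : ∀ g, S (S g) = g) : MulAut G where
  toFun g := S g⁻¹
  invFun g := S g⁻¹
  left_inv g := by simp [map_inv_of_map_mul_rev hmul, hinv]
  right_inv g := by simp [map_inv_of_map_mul_rev hmul, hinv]
  map_mul' g h := by simp [hmul]

variable (S : G → G) (hmul : ∀ g h, S (g * h) = S h * S g) (hinv : ∀ g, S (S g) = g)

theorem inv_mulAutOfAntiInvolution_apply (g : G) :
    (mulAutOfAntiInvolution S hmul hinv g)⁻¹ = S g := by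
  simp [mulAutOfAntiInvolution, map_inv_of_map_mul_rev hmul]

theorem mulAutOfAntiInvolution_mul_self :
    mulAutOfAntiInvolution S hmul hinv * mulAutOfAntiInvolution S hmul hinv = 1 := by
  ext g
  simp [mulAutOfAntiInvolution, map_inv_of_map_mul_rev hmul, hinv]

end AntiInvolution

/-- `sx`, `sy` are the images `x†`, `y†` under an involution `†` of one of the types (I)–(IV),
with `l` in the role of `λ`. -/
def IsNormalForm {G : Type*} [Group G] (x y l sx sy : G) : Prop :=
  (∃ m n : ℤ, sx = l ^ m * x ∧ sy = l ^ n * y) ∨ (sx = x⁻¹ ∧ sy = y⁻¹) ∨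
    (∃ m : ℤ, sx = x ∧ sy = l ^ m * y⁻¹) ∨ (∃ m : ℤ, sx = l ^ m * y ∧ sy = l ^ (-m) * x)

theorem IsNormalForm.map {G H F : Type*} [Group G] [Group H] [FunLike F G H]
    [MonoidHomClass F G H] (f : F) {x y l sx sy : G} (h : IsNormalForm x y l sx sy) :
    IsNormalForm (f x) (f y) (f l) (f sx) (f sy) := by
  rcases h with ⟨m, n, rfl, rfl⟩ | ⟨rfl, rfl⟩ | ⟨m, rfl, rfl⟩ | ⟨m, rfl, rfl⟩
  · exact .inl ⟨m, n, by simp, by simp⟩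
  · exact .inr (.inl ⟨by simp, by simp⟩)
  · exact .inr (.inr (.inl ⟨m, rfl, by simp⟩))
  · exact .inr (.inr (.inr ⟨m, by simp, by simp⟩))

section IntegralInvolutions

open Matrix

theorem isConj_of_mul_eq_mul {n R : Type*} [Fintype n] [DecidableEq n] [CommRing R]
    {A B D : Matrix n n R} (hB : IsUnit B.det) (h : A * B = B * D) : IsConj A D :=
  IsConj.symm ⟨nonsingInvUnit B hB, h.symm⟩

theorem exists_four_mul_mul_self_le (p : ℤ) {q : ℤ} (hq : q ≠ 0) :
    ∃ k, 4 * ((p + q * k) * (p + q * k)) ≤ q * q := by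
  have hm : 0 < q.natAbs := Int.natAbs_pos.2 hq
  refine ⟨-(p.bdiv q.natAbs * q.sign), ?_⟩
  have hp : p + q * -(p.bdiv q.natAbs * q.sign) = p.bmod q.natAbs := by
    linear_combination -(p.bdiv q.natAbs) * Int.mul_sign_self q - Int.bmod_add_bdiv p q.natAbs
  have hb : 2 * p.bmod q.natAbs ≤ q.natAbs ∧ -q.natAbs ≤ 2 * p.bmod q.natAbs := by
    have := Int.le_bmod (x := p) hm
    have := Int.bmod_lt (x := p) hm
    omega
  rw [hp, ← Int.natAbs_mul_self' q]
  nlinarith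

theorem isConj_of_lowerTriangular (p r : ℤ) (hp : p * p = 1) :
    IsConj !![p, 0; r, -p] !![1, 0; 0, -1] ∨ IsConj !![p, 0; r, -p] !![0, 1; 1, 0] := by
  rcases mul_self_eq_one_iff.1 hp with rfl | rfl <;> rcases Int.even_or_odd' r with ⟨k, rfl | rfl⟩
  · refine .inl (isConj_of_mul_eq_mul (B := !![1, 0; k, 1]) (by simp) ?_)
    simp only [mul_fin_two]; ring_nf
  · refine .inr (isConj_of_mul_eq_mul (B := !![1, 1; k, k + 1]) (by simp) ?_)
    simp only [mul_fin_two]; ring_nf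
  · refine .inl (isConj_of_mul_eq_mul (B := !![0, 1; 1, -k]) (by simp) ?_)
    simp only [mul_fin_two]; ring_nf
  · refine .inr (isConj_of_mul_eq_mul (B := !![1, -1; -k, k + 1]) (by simp) ?_)
    simp only [mul_fin_two]; ring_nf

theorem isConj_of_trace_eq_zero (p q r : ℤ) (h : p * p + q * r = 1) :
    IsConj !![p, q; r, -p] !![1, 0; 0, -1] ∨ IsConj !![p, q; r, -p] !![0, 1; 1, 0] := by
  rcases Nat.lt_or_ge q.natAbs 2 with hq | hq
  · interval_cases hq' : q.natAbs
    · rw [Int.natAbs_eq_zero.1 hq'] at h ⊢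
      exact isConj_of_lowerTriangular p r (by simpa using h)
    · refine .inr (isConj_of_mul_eq_mul (B := !![0, q; 1, -p]) ?_ ?_)
      · rw [det_fin_two_of, Int.isUnit_iff]
        omega
      · simp only [mul_fin_two]
        rw [show r * q + -p * -p = 1 by linear_combination h]
        ring_nf
  have hq4 : 4 ≤ q * q := by
    have : (2 : ℤ) ≤ q.natAbs := by exact_mod_cast hq
    nlinarith [Int.natAbs_mul_self' q]
  obtain ⟨k, hk⟩ := exists_four_mul_mul_self_le p (q := q) (by omega)
  set p' := p + q * k
  set r' := r - 2 * p * k - q * k ^ 2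
  have hconj : IsConj !![p, q; r, -p] !![-p', r'; q, p'] := by
    refine isConj_of_mul_eq_mul (B := !![0, 1; 1, k]) (by simp) ?_
    simp only [p', r', mul_fin_two]; ring_nf
  have hlt : r'.natAbs < q.natAbs := by
    rw [Int.natAbs_lt_iff_mul_self_lt]
    have hr : q * r' = 1 - p' * p' := by linear_combination h
    rcases eq_or_lt_of_le (mul_self_nonneg p') with h0 | h0
    · nlinarith
    · nlinarith
  have := isConj_of_trace_eq_zero (-p') r' q (by linear_combination h)
  rw [neg_neg] at this
  exact this.imp hconj.trans hconj.trans
termination_by q.natAbs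

theorem eq_one_or_eq_neg_one_or_isConj_of_mul_self_eq_one {A : Matrix (Fin 2) (Fin 2) ℤ}
    (hA : A * A = 1) :
    A = 1 ∨ A = -1 ∨ IsConj A !![1, 0; 0, -1] ∨ IsConj A !![0, 1; 1, 0] := by
  obtain ⟨p, q, r, s, rfl⟩ : ∃ p q r s, A = !![p, q; r, s] := ⟨_, _, _, _, A.eta_fin_two⟩
  rw [mul_fin_two, one_fin_two] at hA
  obtain ⟨⟨h1, h2⟩, h3, h4⟩ : (p * p + q * r = 1 ∧ p * q + q * s = 0) ∧ r * p + s * r = 0 ∧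
      r * q + s * s = 1 := by simpa using hA
  rcases eq_or_ne (p + s) 0 with hs | hs
  · obtain rfl : s = -p := by linarith
    exact .inr (.inr (isConj_of_trace_eq_zero p q r h1))
  have hq : q = 0 := (mul_eq_zero.1 (by linear_combination h2 : q * (p + s) = 0)).resolve_right hs
  have hr : r = 0 := (mul_eq_zero.1 (by linear_combination h3 : r * (p + s) = 0)).resolve_right hs
  subst hq hr
  rcases mul_self_eq_one_iff.1 (by linarith : p * p = 1) with rfl | rfl <;>
    rcases mul_self_eq_one_iff.1 (by linarith : s * s = 1) with rfl | rfl <;>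
    simp [one_fin_two] at hs ⊢

end IntegralInvolutions

/-- The triple `⟨a, b, c⟩` stands for `x ^ a * y ^ b * λ ^ c`. -/
@[ext]
structure HeisModel where
  a : ℤ
  b : ℤ
  c : ℤ

namespace HeisModel

instance : Mul HeisModel := ⟨fun g h => ⟨g.a + h.a, g.b + h.b, g.c + h.c - h.a * g.b⟩⟩
instance : One HeisModel := ⟨⟨0, 0, 0⟩⟩
instance : Inv HeisModel := ⟨fun g => ⟨-g.a, -g.b, -g.c - g.a * g.b⟩⟩

@[simp] theorem mul_a (g h : HeisModel) : (g * h).a = g.a + h.a := rfl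
@[simp] theorem mul_b (g h : HeisModel) : (g * h).b = g.b + h.b := rfl
@[simp] theorem mul_c (g h : HeisModel) : (g * h).c = g.c + h.c - h.a * g.b := rfl
@[simp] theorem one_a : (1 : HeisModel).a = 0 := rfl
@[simp] theorem one_b : (1 : HeisModel).b = 0 := rfl
@[simp] theorem one_c : (1 : HeisModel).c = 0 := rfl
@[simp] theorem inv_a (g : HeisModel) : g⁻¹.a = -g.a := rfl
@[simp] theorem inv_b (g : HeisModel) : g⁻¹.b = -g.b := rfl
@[simp] theorem inv_c (g : HeisModel) : g⁻¹.c = -g.c - g.a * g.b := rfl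

instance : Group HeisModel where
  mul_assoc _ _ _ := by ext <;> simp <;> ring
  one_mul _ := by ext <;> simp
  mul_one _ := by ext <;> simp
  inv_mul_cancel _ := by ext <;> simp; ring

def x : HeisModel := ⟨1, 0, 0⟩
def y : HeisModel := ⟨0, 1, 0⟩
def lam : HeisModel := ⟨0, 0, 1⟩

def tri (n : ℤ) : ℤ := n * (n - 1) / 2

theorem two_mul_tri (n : ℤ) : 2 * tri n = n * (n - 1) := by
  refine Int.mul_ediv_cancel' ?_
  simpa [mul_comm, sub_add_cancel] using (Int.even_mul_succ_self (n - 1)).two_dvd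

theorem tri_add (m n : ℤ) : tri (m + n) = tri m + tri n + m * n := by
  have := two_mul_tri (m + n); have := two_mul_tri m; have := two_mul_tri n
  linarith

theorem zpow_eq (g : HeisModel) (n : ℤ) :
    g ^ n = ⟨n * g.a, n * g.b, n * g.c - g.a * g.b * tri n⟩ := by
  induction n using Int.induction_on with
  | zero => ext <;> simp [show tri 0 = 0 from rfl]
  | succ k ih => rw [zpow_add_one, ih]; ext <;> simp [tri_add, show tri 1 = 0 from rfl] <;> ring
  | pred k ih =>
    rw [zpow_sub_one, ih]
    ext <;> simp [sub_eq_add_neg, tri_add, show tri (-1) = 1 from rfl] <;> ring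

@[simp] theorem zpow_a (g : HeisModel) (n : ℤ) : (g ^ n).a = n * g.a := by rw [zpow_eq]
@[simp] theorem zpow_b (g : HeisModel) (n : ℤ) : (g ^ n).b = n * g.b := by rw [zpow_eq]
@[simp] theorem zpow_c (g : HeisModel) (n : ℤ) : (g ^ n).c = n * g.c - g.a * g.b * tri n := by
  rw [zpow_eq]

theorem mk_eq (a b c : ℤ) : (⟨a, b, c⟩ : HeisModel) = x ^ a * y ^ b * lam ^ c := by
  ext <;> simp [x, y, lam]

theorem commS_eq (g h : HeisModel) : commS g h = ⟨0, 0, g.a * h.b - h.a * g.b⟩ := by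
  ext <;> simp [commS]; ring

theorem commS_x_y : commS x y = lam := by
  simp [commS_eq, x, y, lam]

theorem commute_lam (g : HeisModel) : Commute lam g := by
  ext <;> simp [lam, add_comm]

end HeisModel

theorem commute_Hlam_Hx : Commute Hlam Hx :=
  commS_eq_one_iff.1 (PresentedGroup.one_of_mem (Or.inl rfl))

theorem commute_Hlam_Hy : Commute Hlam Hy :=
  commS_eq_one_iff.1 (PresentedGroup.one_of_mem (Or.inr rfl))

theorem commute_Hlam (g : Heisenberg) : Commute Hlam g := by
  suffices g ∈ Subgroup.centralizer {Hlam} from (Subgroup.mem_centralizer_singleton_iff.1 this).symm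
  refine PresentedGroup.generated_by _ _ (fun i => ?_) g
  fin_cases i
  exacts [Subgroup.mem_centralizer_singleton_iff.2 commute_Hlam_Hx.symm,
    Subgroup.mem_centralizer_singleton_iff.2 commute_Hlam_Hy.symm]

namespace HeisModel

def toHeisenberg : HeisModel →* Heisenberg :=
  MonoidHom.mk' (fun g => Hx ^ g.a * Hy ^ g.b * Hlam ^ g.c) fun g h => by
    have hyx := zpow_mul_zpow_of_commute_commS commute_Hlam_Hx commute_Hlam_Hy h.a g.b
    rw [← Hlam] at hyx
    have hlam (n : ℤ) (k : Heisenberg) : Hlam ^ n * k = k * Hlam ^ n :=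
      ((commute_Hlam k).zpow_left n).eq
    symm
    calc Hx ^ g.a * Hy ^ g.b * Hlam ^ g.c * (Hx ^ h.a * Hy ^ h.b * Hlam ^ h.c)
        = Hx ^ g.a * (Hy ^ g.b * Hx ^ h.a) * Hy ^ h.b * (Hlam ^ g.c * Hlam ^ h.c) := by
          simp only [mul_assoc]; rw [hlam g.c]; group
      _ = Hx ^ g.a * Hx ^ h.a * Hy ^ g.b * Hy ^ h.b *
          (Hlam ^ (-(h.a * g.b)) * Hlam ^ g.c * Hlam ^ h.c) := by
          rw [hyx]; simp only [mul_assoc]; rw [hlam _ (Hy ^ h.b * _)]; group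
      _ = _ := by simp only [mul_a, mul_b, mul_c]; group

theorem toHeisenberg_apply (g : HeisModel) :
    toHeisenberg g = Hx ^ g.a * Hy ^ g.b * Hlam ^ g.c :=
  rfl

theorem toHeisenberg_x : toHeisenberg x = Hx := by simp [toHeisenberg_apply, x]
theorem toHeisenberg_y : toHeisenberg y = Hy := by simp [toHeisenberg_apply, y]

def ofHeisenberg : Heisenberg →* HeisModel :=
  PresentedGroup.toGroup (f := ![x, y]) fun r hr => by
    rcases hr with rfl | rfl <;> simp [map_commS, commS_x_y, commS_eq_one_iff.2 (commute_lam _)]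

theorem ofHeisenberg_Hx : ofHeisenberg Hx = x := PresentedGroup.toGroup.of _
theorem ofHeisenberg_Hy : ofHeisenberg Hy = y := PresentedGroup.toGroup.of _
theorem ofHeisenberg_Hlam : ofHeisenberg Hlam = lam := by
  rw [Hlam, map_commS, ofHeisenberg_Hx, ofHeisenberg_Hy, commS_x_y]

noncomputable def equivHeisenberg : HeisModel ≃* Heisenberg :=
  MonoidHom.toMulEquiv toHeisenberg ofHeisenberg
    (MonoidHom.ext fun g => by
      simp [toHeisenberg_apply, ofHeisenberg_Hx, ofHeisenberg_Hy, ofHeisenberg_Hlam, ← mk_eq])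
    (PresentedGroup.ext fun i => by
      fin_cases i
      exacts [congrArg toHeisenberg ofHeisenberg_Hx |>.trans toHeisenberg_x,
        congrArg toHeisenberg ofHeisenberg_Hy |>.trans toHeisenberg_y])

theorem equivHeisenberg_x : equivHeisenberg x = Hx := toHeisenberg_x
theorem equivHeisenberg_y : equivHeisenberg y = Hy := toHeisenberg_y
theorem equivHeisenberg_lam : equivHeisenberg lam = Hlam := by
  simp [equivHeisenberg, toHeisenberg_apply, lam]

open scoped Matrix

def ab (g : HeisModel) : Fin 2 → ℤ := ![g.a, g.b]

theorem ab_one : ab 1 = 0 := by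
  funext i; fin_cases i <;> rfl

theorem eq_mul_lam_zpow_of_ab_eq {g h : HeisModel} (hab : ab g = ab h) :
    h = g * lam ^ (h.c - g.c) := by
  have ha : g.a = h.a := congrFun hab 0
  have hb : g.b = h.b := congrFun hab 1
  ext <;> simp [lam, ha, hb]

/-- The matrix of the map induced by `f` on `ℤ² = Γ / ⟨λ⟩`, in the basis `x, y`. -/
def linearPart (f : HeisModel → HeisModel) : Matrix (Fin 2) (Fin 2) ℤ :=
  !![(f x).a, (f y).a; (f x).b, (f y).b]

theorem exists_apply_x (f : HeisModel → HeisModel) :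
    ∃ u, f x = ⟨linearPart f 0 0, linearPart f 1 0, u⟩ :=
  ⟨_, rfl⟩

theorem exists_apply_y (f : HeisModel → HeisModel) :
    ∃ v, f y = ⟨linearPart f 0 1, linearPart f 1 1, v⟩ :=
  ⟨_, rfl⟩

section Hom

variable {F : Type*} [FunLike F HeisModel HeisModel] [MonoidHomClass F HeisModel HeisModel]

theorem map_lam (f : F) : f lam = lam ^ (linearPart f).det := by
  rw [← commS_x_y, map_commS, commS_eq, commS_x_y, linearPart, Matrix.det_fin_two_of]
  ext <;> simp [lam]

theorem map_mk (f : F) (a b c : ℤ) :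
    f ⟨a, b, c⟩ = f x ^ a * f y ^ b * lam ^ ((linearPart f).det * c) := by
  rw [mk_eq, map_mul, map_mul, map_zpow, map_zpow, map_zpow, map_lam, ← zpow_mul]

theorem map_a (f : F) (g : HeisModel) : (f g).a = (f x).a * g.a + (f y).a * g.b := by
  rw [map_mk]; simp only [mul_a, zpow_a, lam]; ring

theorem map_b (f : F) (g : HeisModel) : (f g).b = (f x).b * g.a + (f y).b * g.b := by
  rw [map_mk]; simp only [mul_b, zpow_b, lam]; ring

theorem ab_map (f : F) (g : HeisModel) : ab (f g) = linearPart f *ᵥ ab g := by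
  ext i
  fin_cases i <;> simp [ab, linearPart, Matrix.mulVec, dotProduct, map_a f g, map_b f g]

theorem linearPart_comp (f g : F) : linearPart (f ∘ g) = linearPart f * linearPart g := by
  simp only [linearPart, Function.comp_apply, Matrix.mul_fin_two]
  rw [map_a f (g x), map_a f (g y), map_b f (g x), map_b f (g y)]

end Hom

theorem bijective_of_isUnit_det (f : HeisModel →* HeisModel) (hf : IsUnit (linearPart f).det) :
    Function.Bijective f := by
  set B := linearPart f
  have hdet : B.det * B.det = 1 := by rcases Int.isUnit_iff.1 hf with h | h <;> simp [h]
  refine ⟨(injective_iff_map_eq_one f).2 fun g hg => ?_, fun h => ?_⟩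
  · have hab : ab 1 = ab g := by
      rw [ab_one, eq_comm]
      exact Matrix.eq_zero_of_mulVec_eq_zero hf.ne_zero (by rw [← ab_map, hg, ab_one])
    have hg' := eq_mul_lam_zpow_of_ab_eq hab
    rw [hg', one_mul, map_zpow, map_lam] at hg
    have hc : g.c = 0 ∨ B.det = 0 := by simpa [lam] using congrArg HeisModel.c hg
    rw [hg', hc.resolve_right hf.ne_zero, one_c, sub_zero, zpow_zero, mul_one]
  · set g : HeisModel := ⟨(B⁻¹ *ᵥ ab h) 0, (B⁻¹ *ᵥ ab h) 1, 0⟩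
    have hg : ab (f g) = ab h := by
      rw [ab_map, show ab g = B⁻¹ *ᵥ ab h by ext i; fin_cases i <;> rfl,
        Matrix.mulVec_mulVec, Matrix.mul_nonsing_inv _ hf, Matrix.one_mulVec]
    refine ⟨g * lam ^ (B.det * (h.c - (f g).c)), ?_⟩
    rw [map_mul, map_zpow, map_lam, ← zpow_mul, ← mul_assoc, hdet, one_mul,
      ← eq_mul_lam_zpow_of_ab_eq hg]

/-- `lift B ⟨a, b, c⟩ = X ^ a * Y ^ b * λ ^ (det B * c)`, where `X = ⟨B 0 0, B 1 0, 0⟩` and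
`Y = ⟨B 0 1, B 1 1, 0⟩`. -/
def lift (B : Matrix (Fin 2) (Fin 2) ℤ) : HeisModel →* HeisModel :=
  MonoidHom.mk' (fun g => ⟨B 0 0 * g.a + B 0 1 * g.b, B 1 0 * g.a + B 1 1 * g.b,
      B.det * g.c - B 0 0 * B 1 0 * tri g.a - B 0 1 * B 1 1 * tri g.b - B 0 1 * B 1 0 * g.a * g.b⟩)
    fun g h => by ext <;> simp [tri_add, Matrix.det_fin_two] <;> ring

theorem linearPart_lift (B : Matrix (Fin 2) (Fin 2) ℤ) : linearPart (lift B) = B := by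
  rw [B.eta_fin_two]
  simp [linearPart, lift, x, y]

theorem exists_linearPart_eq {B : Matrix (Fin 2) (Fin 2) ℤ} (hB : IsUnit B.det) :
    ∃ φ : MulAut HeisModel, linearPart φ = B :=
  ⟨MulEquiv.ofBijective (lift B) (bijective_of_isUnit_det _ (by rwa [linearPart_lift])),
    linearPart_lift B⟩

def linearPartHom : MulAut HeisModel →* Matrix (Fin 2) (Fin 2) ℤ where
  toFun φ := linearPart φ
  map_one' := by simp [linearPart, x, y, Matrix.one_fin_two]
  map_mul' φ ψ := linearPart_comp φ ψ

theorem exists_linearPartHom_conj_eq {σ : MulAut HeisModel} {D : Matrix (Fin 2) (Fin 2) ℤ}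
    (h : IsConj (linearPartHom σ) D) :
    ∃ φ : MulAut HeisModel, linearPartHom (φ * σ * φ⁻¹) = D := by
  obtain ⟨c, hc⟩ := h
  obtain ⟨φ, hφ⟩ := exists_linearPart_eq ((Matrix.isUnit_iff_isUnit_det _).1 c.isUnit)
  have hφ' : linearPartHom φ = c := hφ
  have hφinv : linearPartHom φ⁻¹ = ↑c⁻¹ :=
    calc linearPartHom φ⁻¹ = linearPartHom (φ⁻¹ * φ) * ↑c⁻¹ := by
          rw [map_mul, hφ', mul_assoc, Units.mul_inv, mul_one]
      _ = ↑c⁻¹ := by rw [inv_mul_cancel, map_one, one_mul]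
  refine ⟨φ, ?_⟩
  rw [map_mul, map_mul, hφ', hφinv, hc.eq, mul_assoc, Units.mul_inv, mul_one]

section Involution

variable {F : Type*} [FunLike F HeisModel HeisModel] [MonoidHomClass F HeisModel HeisModel]

theorem isNormalForm_of_linearPart_eq_neg_one (f : HeisModel → HeisModel)
    (h : linearPart f = -1) : IsNormalForm x y lam (f x)⁻¹ (f y)⁻¹ := by
  obtain ⟨u, hx⟩ : ∃ u, f x = ⟨-1, 0, u⟩ := by simpa [h] using exists_apply_x f
  obtain ⟨v, hy⟩ : ∃ v, f y = ⟨0, -1, v⟩ := by simpa [h] using exists_apply_y f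
  refine .inl ⟨-u, -v, ?_, ?_⟩
  · rw [hx]; ext <;> simp [x, lam]
  · rw [hy]; ext <;> simp [y, lam]

theorem isNormalForm_of_linearPart_eq_one (f : F) (hf : ∀ g, f (f g) = g)
    (h : linearPart f = 1) : IsNormalForm x y lam (f x)⁻¹ (f y)⁻¹ := by
  obtain ⟨u, hx⟩ : ∃ u, f x = ⟨1, 0, u⟩ := by simpa [h] using exists_apply_x f
  obtain ⟨v, hy⟩ : ∃ v, f y = ⟨0, 1, v⟩ := by simpa [h] using exists_apply_y f
  have hu : u = 0 := by
    have := congrArg HeisModel.c (hf x)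
    rw [hx, map_mk, hx, hy, h] at this
    simpa [x, lam] using this
  have hv : v = 0 := by
    have := congrArg HeisModel.c (hf y)
    rw [hy, map_mk, hx, hy, h] at this
    simpa [y, lam] using this
  subst hu hv
  exact .inr (.inl ⟨by rw [hx]; ext <;> simp [x], by rw [hy]; ext <;> simp [y]⟩)

theorem isNormalForm_of_linearPart_eq_diag (f : F) (hf : ∀ g, f (f g) = g)
    (h : linearPart f = !![-1, 0; 0, 1]) : IsNormalForm x y lam (f x)⁻¹ (f y)⁻¹ := by
  obtain ⟨u, hx⟩ : ∃ u, f x = ⟨-1, 0, u⟩ := by simpa [h] using exists_apply_x f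
  obtain ⟨v, hy⟩ : ∃ v, f y = ⟨0, 1, v⟩ := by simpa [h] using exists_apply_y f
  have hu : u = 0 := by
    have := congrArg HeisModel.c (hf x)
    rw [hx, map_mk, hx, hy, h] at this
    simpa [x, lam] using this
  subst hu
  refine .inr (.inr (.inl ⟨-v, ?_, ?_⟩))
  · rw [hx]; ext <;> simp [x]
  · rw [hy]; ext <;> simp [y, lam]

theorem isNormalForm_of_linearPart_eq_antidiag (f : F) (hf : ∀ g, f (f g) = g)
    (h : linearPart f = !![0, -1; -1, 0]) : IsNormalForm x y lam (f x)⁻¹ (f y)⁻¹ := by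
  obtain ⟨u, hx⟩ : ∃ u, f x = ⟨0, -1, u⟩ := by simpa [h] using exists_apply_x f
  obtain ⟨v, hy⟩ : ∃ v, f y = ⟨-1, 0, v⟩ := by simpa [h] using exists_apply_y f
  have hv : v = -u := by
    have := congrArg HeisModel.c (hf x)
    rw [hx, map_mk, hx, hy, h] at this
    have hc : -v + -u = 0 := by simpa [x, lam] using this
    omega
  subst hv
  refine .inr (.inr (.inr ⟨-u, ?_, ?_⟩))
  · rw [hx]; ext <;> simp [y, lam]
  · rw [hy]; ext <;> simp [x, lam]

end Involution

theorem exists_isNormalForm_conj (σ : MulAut HeisModel) (hσ : σ * σ = 1) :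
    ∃ φ : MulAut HeisModel, IsNormalForm x y lam ((φ * σ * φ⁻¹) x)⁻¹ ((φ * σ * φ⁻¹) y)⁻¹ := by
  -- `-linearPartHom σ` is the matrix by which `g ↦ (σ g)⁻¹` acts on `ℤ²`.
  have hA : -linearPartHom σ * -linearPartHom σ = 1 := by
    rw [neg_mul_neg, ← map_mul, hσ, map_one]
  have hneg {D} (h : IsConj (-linearPartHom σ) D) : IsConj (linearPartHom σ) (-D) := by
    obtain ⟨c, hc⟩ := h
    exact ⟨c, by simpa using hc.neg_right⟩
  obtain ⟨φ, hφ⟩ : ∃ φ : MulAut HeisModel, linearPartHom (φ * σ * φ⁻¹) = -1 ∨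
      linearPartHom (φ * σ * φ⁻¹) = 1 ∨ linearPartHom (φ * σ * φ⁻¹) = !![-1, 0; 0, 1] ∨
      linearPartHom (φ * σ * φ⁻¹) = !![0, -1; -1, 0] := by
    rcases eq_one_or_eq_neg_one_or_isConj_of_mul_self_eq_one hA with h | h | h | h
    · exact ⟨1, .inl (by simpa using neg_eq_iff_eq_neg.1 h)⟩
    · exact ⟨1, .inr (.inl (by simpa using h))⟩
    · obtain ⟨φ, hφ⟩ := exists_linearPartHom_conj_eq (hneg h)
      exact ⟨φ, .inr (.inr (.inl (by simpa using hφ)))⟩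
    · obtain ⟨φ, hφ⟩ := exists_linearPartHom_conj_eq (hneg h)
      exact ⟨φ, .inr (.inr (.inr (by simpa using hφ)))⟩
  have hinv (g : HeisModel) : (φ * σ * φ⁻¹) ((φ * σ * φ⁻¹) g) = g := by
    rw [← MulAut.mul_apply, show φ * σ * φ⁻¹ * (φ * σ * φ⁻¹) = φ * (σ * σ) * φ⁻¹ by group, hσ,
      mul_one, mul_inv_cancel, MulAut.one_apply]
  refine ⟨φ, ?_⟩
  rcases hφ with h | h | h | h
  exacts [isNormalForm_of_linearPart_eq_neg_one _ h, isNormalForm_of_linearPart_eq_one _ hinv h,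
    isNormalForm_of_linearPart_eq_diag _ hinv h, isNormalForm_of_linearPart_eq_antidiag _ hinv h]

end HeisModel

theorem heisenberg_involution_classification
    (star : Heisenberg → Heisenberg)
    (hstar_mul : ∀ g h : Heisenberg, star (g * h) = star h * star g)
    (hstar_invol : ∀ g : Heisenberg, star (star g) = g) :
    ∃ φ : MulAut Heisenberg,
      (∃ m n : ℤ, φ (star (φ.symm Hx)) = Hlam ^ m * Hx ∧
        φ (star (φ.symm Hy)) = Hlam ^ n * Hy) ∨
      (φ (star (φ.symm Hx)) = Hx⁻¹ ∧ φ (star (φ.symm Hy)) = Hy⁻¹) ∨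
      (∃ m : ℤ, φ (star (φ.symm Hx)) = Hx ∧ φ (star (φ.symm Hy)) = Hlam ^ m * Hy⁻¹) ∨
      (∃ m : ℤ, φ (star (φ.symm Hx)) = Hlam ^ m * Hy ∧
        φ (star (φ.symm Hy)) = Hlam ^ (-m) * Hx) := by
  set σ := mulAutOfAntiInvolution star hstar_mul hstar_invol
  set e := HeisModel.equivHeisenberg
  obtain ⟨φ, hφ⟩ := HeisModel.exists_isNormalForm_conj (MulAut.congr e.symm σ)
    (by rw [← map_mul, mulAutOfAntiInvolution_mul_self, map_one])
  refine ⟨MulAut.congr e φ, ?_⟩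
  have key (g : HeisModel) : MulAut.congr e φ (star ((MulAut.congr e φ).symm (e g))) =
      e ((φ * MulAut.congr e.symm σ * φ⁻¹) g)⁻¹ := by
    simp [← inv_mulAutOfAntiInvolution_apply star hstar_mul hstar_invol, σ]
  have := hφ.map e
  rwa [← key, ← key, HeisModel.equivHeisenberg_x, HeisModel.equivHeisenberg_y,
    HeisModel.equivHeisenberg_lam] at this
end

section
/- For all integers m, n, each of the following four assignments extends to an involution ⋆ on the Heisenberg group Γ: (I) x⋆ = λ^m·x and y⋆ = λ^n·y; (II) x⋆ = x⁻¹ and y⋆ = y⁻¹; (III) x⋆ = x and y⋆ = λ^m·y⁻¹; (IV) x⋆ = λ^m·y and y⋆ = λ^{−m}·x. That is, in each case there exists a map ⋆ : Γ → Γ with (gh)⋆ = h⋆g⋆ and g⋆⋆ = g for all g, h ∈ Γ, taking the prescribed values on x and y. -/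
/-!
An anti-multiplicative involution is the same thing as `g ↦ (ψ g)⁻¹` for an endomorphism `ψ` with
`ψ ∘ ψ = id`. To realise `x⋆ = a`, `y⋆ = b` take `ψ : x ↦ a⁻¹, y ↦ b⁻¹`. In all four cases
`[a⁻¹, b⁻¹]` is `λ` or `λ⁻¹`, because central factors drop out of commutators and `[x^±1, y^±1]`
is `λ^±1`; being central, it satisfies the defining relations, so `ψ` exists and sends `λ` to
`λ^±1`. Then `ψ (ψ x) = x` and `ψ (ψ y) = y` are short computations with the central element `λ`.
-/

section Commutator

variable {G : Type*} [Group G] {a b z : G}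

lemma map_commS_s15 {H : Type*} [Group H] (φ : G →* H) (a b : G) :
    φ (commS a b) = commS (φ a) (φ b) := by
  simp only [commS, map_mul, map_inv]

lemma commS_eq_one_iff_s15 : commS a b = 1 ↔ Commute a b := by
  rw [commS, mul_assoc, mul_assoc, inv_mul_eq_one, eq_inv_mul_iff_mul_eq]
  exact eq_comm

lemma inv_commS (a b : G) : (commS a b)⁻¹ = commS b a := by
  simp only [commS, mul_inv_rev, inv_inv, mul_assoc]

lemma commS_inv_left (h : Commute (commS a b) a) : commS a⁻¹ b = (commS a b)⁻¹ :=
  calc commS a⁻¹ b = a * (commS a b)⁻¹ * a⁻¹ := by simp only [commS]; group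
    _ = (commS a b)⁻¹ := h.inv_left.symm.mul_inv_cancel

lemma commS_inv_right (h : Commute (commS a b) b) : commS a b⁻¹ = (commS a b)⁻¹ :=
  calc commS a b⁻¹ = b * (commS a b)⁻¹ * b⁻¹ := by simp only [commS]; group
    _ = (commS a b)⁻¹ := h.inv_left.symm.mul_inv_cancel

lemma commS_mul_left_of_mem_center (hz : z ∈ Subgroup.center G) :
    commS (a * z) b = commS a b := by
  have hc (g : G) : Commute z g := (Subgroup.mem_center_iff.mp hz g).symm
  calc commS (a * z) b = z⁻¹ * commS a b * (b⁻¹ * z * b) := by simp only [commS]; group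
    _ = commS a b := by rw [(hc b).symm.inv_mul_cancel, (hc _).inv_mul_cancel]

lemma commS_mul_right_of_mem_center (hz : z ∈ Subgroup.center G) :
    commS a (b * z) = commS a b := by
  have hc (g : G) : Commute z g := (Subgroup.mem_center_iff.mp hz g).symm
  calc commS a (b * z) = a⁻¹ * z⁻¹ * a * commS a b * z := by simp only [commS]; group
    _ = commS a b := by rw [(hc a).inv_left.symm.inv_mul_cancel, (hc _).inv_mul_cancel]

end Commutator

lemma exists_involution_of_involutive {G : Type*} [Group G] (ψ : G →* G)
    (hψ : Function.Involutive ψ) :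
    ∃ star : G → G, (∀ g h, star (g * h) = star h * star g) ∧ (∀ g, star (star g) = g) ∧
      ∀ g, star g = (ψ g)⁻¹ :=
  ⟨fun g => (ψ g)⁻¹, fun g h => by simp, fun g => by simp [hψ g], fun _ => rfl⟩

namespace Heisenberg

lemma commute_Hlam (g : Heisenberg) : Commute Hlam g := by
  have hx := PresentedGroup.one_of_mem (Set.mem_insert _ _ : _ ∈ heisRels)
  have hy := PresentedGroup.one_of_mem (Set.mem_insert_of_mem _ rfl : _ ∈ heisRels)
  rw [map_commS_s15, map_commS_s15] at hx hy
  have hgen (j : Fin 2) : PresentedGroup.of j ∈ Subgroup.centralizer {Hlam} := by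
    rw [Subgroup.mem_centralizer_singleton_iff]
    fin_cases j
    · exact (commS_eq_one_iff_s15.mp hx).symm
    · exact (commS_eq_one_iff_s15.mp hy).symm
  exact (Subgroup.mem_centralizer_singleton_iff.mp (PresentedGroup.generated_by _ _ hgen g)).symm

lemma Hlam_mem_center : Hlam ∈ Subgroup.center Heisenberg :=
  Subgroup.mem_center_iff.mpr fun g => (commute_Hlam g).symm

lemma zpow_Hlam_mem_center (k : ℤ) : Hlam ^ k ∈ Subgroup.center Heisenberg :=
  zpow_mem Hlam_mem_center k

lemma commS_inv_Hx_Hy : commS Hx⁻¹ Hy = Hlam⁻¹ :=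
  commS_inv_left (commute_Hlam _)

lemma commS_inv_Hx_inv_Hy : commS Hx⁻¹ Hy⁻¹ = Hlam := by
  rw [commS_inv_right (commS_inv_Hx_Hy ▸ (commute_Hlam _).inv_left), commS_inv_Hx_Hy, inv_inv]

lemma zpow_Hlam_mul_inv_zpow_Hlam_mul (k : ℤ) (g : Heisenberg) :
    Hlam ^ k * (Hlam ^ k * g)⁻¹ = g⁻¹ := by
  rw [((commute_Hlam _).zpow_left k).eq, mul_inv_rev, inv_mul_cancel_right]

variable {G : Type*} [Group G]

def lift (a b : G) (ha : Commute (commS a b) a) (hb : Commute (commS a b) b) : Heisenberg →* G :=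
  PresentedGroup.toGroup (f := ![a, b]) <| by
    rintro r (rfl | rfl)
    · simp only [map_commS_s15, FreeGroup.lift_apply_of]
      exact commS_eq_one_iff_s15.mpr ha
    · simp only [map_commS_s15, FreeGroup.lift_apply_of]
      exact commS_eq_one_iff_s15.mpr hb

section lift

variable {a b : G} {ha : Commute (commS a b) a} {hb : Commute (commS a b) b}

@[simp] lemma lift_Hx : lift a b ha hb Hx = a := PresentedGroup.toGroup.of _
@[simp] lemma lift_Hy : lift a b ha hb Hy = b := PresentedGroup.toGroup.of _
@[simp] lemma lift_Hlam : lift a b ha hb Hlam = commS a b := by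
  rw [Hlam, map_commS_s15, lift_Hx, lift_Hy]

end lift

lemma hom_ext {φ ψ : Heisenberg →* G} (hx : φ Hx = ψ Hx) (hy : φ Hy = ψ Hy) : φ = ψ :=
  PresentedGroup.ext (Fin.forall_fin_two.mpr ⟨hx, hy⟩)

lemma involutive_of_generators (ψ : Heisenberg →* Heisenberg) (hx : ψ (ψ Hx) = Hx)
    (hy : ψ (ψ Hy) = Hy) : Function.Involutive ψ :=
  DFunLike.congr_fun (hom_ext (φ := ψ.comp ψ) (ψ := MonoidHom.id _) hx hy)

/-- `ha` and `hb` say that `ψ : x ↦ a⁻¹, y ↦ b⁻¹` satisfies `ψ (ψ x) = x` and `ψ (ψ y) = y`;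
they only mention the values of `ψ` on `x`, `y` and `λ`, which determine `ψ a` and `ψ b`. -/
lemma exists_involution_of_commS_eq (a b : Heisenberg) (k : ℤ)
    (hab : commS a⁻¹ b⁻¹ = Hlam ^ k)
    (ha : ∀ ψ : Heisenberg →* Heisenberg,
      ψ Hx = a⁻¹ → ψ Hy = b⁻¹ → ψ Hlam = Hlam ^ k → ψ a = Hx⁻¹)
    (hb : ∀ ψ : Heisenberg →* Heisenberg,
      ψ Hx = a⁻¹ → ψ Hy = b⁻¹ → ψ Hlam = Hlam ^ k → ψ b = Hy⁻¹) :
    ∃ star : Heisenberg → Heisenberg,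
      (∀ g h : Heisenberg, star (g * h) = star h * star g) ∧
      (∀ g : Heisenberg, star (star g) = g) ∧
      star Hx = a ∧ star Hy = b := by
  have hcomm (g : Heisenberg) : Commute (commS a⁻¹ b⁻¹) g := hab ▸ (commute_Hlam g).zpow_left k
  set ψ := lift a⁻¹ b⁻¹ (hcomm _) (hcomm _)
  have hlam : ψ Hlam = Hlam ^ k := (lift_Hlam).trans hab
  have hψ : Function.Involutive ψ := involutive_of_generators ψ
    (by rw [lift_Hx, map_inv, ha ψ lift_Hx lift_Hy hlam, inv_inv])
    (by rw [lift_Hy, map_inv, hb ψ lift_Hx lift_Hy hlam, inv_inv])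
  obtain ⟨star, hmul, hinv, hstar⟩ := exists_involution_of_involutive ψ hψ
  exact ⟨star, hmul, hinv, by rw [hstar, lift_Hx, inv_inv], by rw [hstar, lift_Hy, inv_inv]⟩

lemma exists_involution_zpow_Hlam_mul (m n : ℤ) :
    ∃ star : Heisenberg → Heisenberg,
      (∀ g h : Heisenberg, star (g * h) = star h * star g) ∧
      (∀ g : Heisenberg, star (star g) = g) ∧
      star Hx = Hlam ^ m * Hx ∧ star Hy = Hlam ^ n * Hy := by
  refine exists_involution_of_commS_eq _ _ 1 ?_ ?_ ?_
  · rw [mul_inv_rev, mul_inv_rev, commS_mul_left_of_mem_center (inv_mem (zpow_Hlam_mem_center _)),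
      commS_mul_right_of_mem_center (inv_mem (zpow_Hlam_mem_center _)), commS_inv_Hx_inv_Hy,
      zpow_one]
  · intro ψ hx _ hlam
    rw [map_mul, map_zpow, hx, hlam, zpow_one, zpow_Hlam_mul_inv_zpow_Hlam_mul]
  · intro ψ _ hy hlam
    rw [map_mul, map_zpow, hy, hlam, zpow_one, zpow_Hlam_mul_inv_zpow_Hlam_mul]

lemma exists_involution_inv :
    ∃ star : Heisenberg → Heisenberg,
      (∀ g h : Heisenberg, star (g * h) = star h * star g) ∧
      (∀ g : Heisenberg, star (star g) = g) ∧
      star Hx = Hx⁻¹ ∧ star Hy = Hy⁻¹ := by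
  refine exists_involution_of_commS_eq _ _ 1 ?_ ?_ ?_
  · rw [inv_inv, inv_inv, zpow_one]
    rfl
  · intro ψ hx _ _
    rw [map_inv, hx, inv_inv]
  · intro ψ _ hy _
    rw [map_inv, hy, inv_inv]

lemma exists_involution_fix_Hx (m : ℤ) :
    ∃ star : Heisenberg → Heisenberg,
      (∀ g h : Heisenberg, star (g * h) = star h * star g) ∧
      (∀ g : Heisenberg, star (star g) = g) ∧
      star Hx = Hx ∧ star Hy = Hlam ^ m * Hy⁻¹ := by
  refine exists_involution_of_commS_eq _ _ (-1) ?_ ?_ ?_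
  · rw [mul_inv_rev, inv_inv, commS_mul_right_of_mem_center (inv_mem (zpow_Hlam_mem_center _)),
      commS_inv_Hx_Hy, zpow_neg_one]
  · intro ψ hx _ _
    exact hx
  · intro ψ _ hy hlam
    rw [map_mul, map_zpow, map_inv, hy, hlam]
    group

lemma exists_involution_swap (m : ℤ) :
    ∃ star : Heisenberg → Heisenberg,
      (∀ g h : Heisenberg, star (g * h) = star h * star g) ∧
      (∀ g : Heisenberg, star (star g) = g) ∧
      star Hx = Hlam ^ m * Hy ∧ star Hy = Hlam ^ (-m) * Hx := by
  refine exists_involution_of_commS_eq _ _ (-1) ?_ ?_ ?_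
  · rw [mul_inv_rev, mul_inv_rev, commS_mul_left_of_mem_center (inv_mem (zpow_Hlam_mem_center _)),
      commS_mul_right_of_mem_center (inv_mem (zpow_Hlam_mem_center _)), ← inv_commS,
      commS_inv_Hx_inv_Hy, zpow_neg_one]
  · intro ψ _ hy hlam
    rw [map_mul, map_zpow, hy, hlam, zpow_neg_one, inv_zpow', zpow_Hlam_mul_inv_zpow_Hlam_mul]
  · intro ψ hx _ hlam
    rw [map_mul, map_zpow, hx, hlam, zpow_neg_one, inv_zpow', neg_neg,
      zpow_Hlam_mul_inv_zpow_Hlam_mul]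

end Heisenberg

theorem heisenberg_involutions_of_four_types_exist (m n : ℤ) :
    (∃ star : Heisenberg → Heisenberg,
      (∀ g h : Heisenberg, star (g * h) = star h * star g) ∧
      (∀ g : Heisenberg, star (star g) = g) ∧
      star Hx = Hlam ^ m * Hx ∧ star Hy = Hlam ^ n * Hy) ∧
    (∃ star : Heisenberg → Heisenberg,
      (∀ g h : Heisenberg, star (g * h) = star h * star g) ∧
      (∀ g : Heisenberg, star (star g) = g) ∧
      star Hx = Hx⁻¹ ∧ star Hy = Hy⁻¹) ∧
    (∃ star : Heisenberg → Heisenberg,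
      (∀ g h : Heisenberg, star (g * h) = star h * star g) ∧
      (∀ g : Heisenberg, star (star g) = g) ∧
      star Hx = Hx ∧ star Hy = Hlam ^ m * Hy⁻¹) ∧
    (∃ star : Heisenberg → Heisenberg,
      (∀ g h : Heisenberg, star (g * h) = star h * star g) ∧
      (∀ g : Heisenberg, star (star g) = g) ∧
      star Hx = Hlam ^ m * Hy ∧ star Hy = Hlam ^ (-m) * Hx) :=
  ⟨Heisenberg.exists_involution_zpow_Hlam_mul m n, Heisenberg.exists_involution_inv,
    Heisenberg.exists_involution_fix_Hx m, Heisenberg.exists_involution_swap m⟩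
end
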